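/- Let t_1,…,t_5 be positive reals satisfying Assumption 1. Then, as T → ∞, E(T; t_1,t_2,t_3,t_4,t_5) − E(T; t_5,t_2,t_3,t_4,t_1) = −(1/(96 t_2 t_4))·(1/t_5 − 1/t_1)·T^3 + o(T^3). (This is the difference between the numbers of points moving on the H-junction Γ_H and on the H-junction Γ'_H obtained from Γ_H by permuting the edges e_1 and e_5, both started from the vertex A.) -/
import Mathlib


open Filter Asymptotics

/-- `W(s₁, …, s_m; T)`: the number of `m`-tuples of nonnegative integers `(n₁, …, n_m)` with
`s₁ n₁ + ⋯ + s_m n_m ≤ T`. -/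
noncomputable def W {m : ℕ} (s : Fin m → ℝ) (T : ℝ) : ℕ :=
  Nat.card {n : Fin m → ℕ | ∑ i, (n i : ℝ) * s i ≤ T}

/-- `E(T; a,b,c,d,e)`: up to an additive constant, the total number of points moving at time `T`
on the H-shaped tree with pendant edges of travel times `a`, `b` at the starting vertex, jumper
of travel time `c`, and pendant edges of travel times `d`, `e` at the other inner vertex. -/
noncomputable def Etot (a b c d e T : ℝ) : ℤ :=
  ((W ![2*a, 2*c, 2*d, 2*e] T : ℤ) + (W ![2*b, 2*c, 2*d, 2*e] T : ℤ)
      - (W ![2*a, 2*d, 2*e] T : ℤ) - (W ![2*b, 2*d, 2*e] T : ℤ)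
      + (W ![2*a, 2*b] T : ℤ) + (W ![2*a] T : ℤ) + (W ![2*b] T : ℤ))
    + ((W ![2*a, 2*b, 2*d, 2*e] (T - c) : ℤ) + (W ![2*a, 2*b, 2*c, 2*e] (T - c) : ℤ)
      + (W ![2*a, 2*b, 2*c, 2*d] (T - c) : ℤ) - (W ![2*a, 2*b] (T - c) : ℤ))

/-- `W` is invariant under permutations of the weights. -/
lemma W_congr {m : ℕ} (s s' : Fin m → ℝ) (π : Equiv.Perm (Fin m))
    (h : ∀ i, s' i = s (π i)) (T : ℝ) : W s' T = W s T := by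
  unfold W
  apply Nat.card_congr
  refine ⟨fun n => ⟨fun i => n.1 (π.symm i), ?_⟩, fun n => ⟨fun i => n.1 (π i), ?_⟩, ?_, ?_⟩
  · have hn := n.2
    simp only [Set.mem_setOf_eq] at hn ⊢
    calc ∑ i, (↑(n.1 (π.symm i)) : ℝ) * s i
        = ∑ i, (↑(n.1 (π.symm (π i))) : ℝ) * s (π i) := (Equiv.sum_comp π _).symm
      _ = ∑ i, (↑(n.1 i) : ℝ) * s' i := by simp [h]
      _ ≤ T := hn
  · have hn := n.2
    simp only [Set.mem_setOf_eq] at hn ⊢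
    calc ∑ i, (↑(n.1 (π i)) : ℝ) * s' i
        = ∑ i, (↑(n.1 (π i)) : ℝ) * s (π i) := by simp [h]
      _ = ∑ i, (↑(n.1 i) : ℝ) * s i := Equiv.sum_comp π (fun i => (↑(n.1 i) : ℝ) * s i)
      _ ≤ T := hn
  · intro n; ext i; simp
  · intro n; ext i; simp

/-- If `c·T³ = o(T³)` then `c = 0`. -/
lemma const_eq_zero_of_littleo {c : ℝ}
    (h : (fun T : ℝ => c * T ^ 3) =o[atTop] fun T : ℝ => T ^ 3) : c = 0 := by
  by_contra hc
  rw [isLittleO_iff] at h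
  have h2 := h (c := |c| / 2) (by positivity)
  obtain ⟨T, hT1, hT2⟩ := (h2.and (eventually_ge_atTop (1:ℝ))).exists
  rw [Real.norm_eq_abs, Real.norm_eq_abs, abs_mul] at hT1
  have hT3 : (1:ℝ) ≤ |T ^ 3| := by
    rw [abs_of_nonneg (by positivity : (0:ℝ) ≤ T ^ 3)]
    nlinarith [sq_nonneg T, sq_nonneg (T-1), mul_self_nonneg (T-1)]
  nlinarith [abs_pos.mpr hc, hT1, hT3]

lemma shifted_cube_isBigO (c : ℝ) :
    (fun T : ℝ => (T - c) ^ 3) =O[atTop] fun T : ℝ => T ^ 3 := by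
  rw [isBigO_iff]
  refine ⟨8, ?_⟩
  filter_upwards [eventually_ge_atTop (|c|), eventually_ge_atTop (0:ℝ)] with T hT hT0
  have h1 : |T - c| ≤ 2 * |T| := by
    rw [abs_of_nonneg hT0] at *
    rw [abs_le]; constructor <;> cases abs_cases c <;> linarith
  rw [Real.norm_eq_abs, Real.norm_eq_abs, abs_pow, abs_pow]
  calc |T - c| ^ 3 ≤ (2 * |T|) ^ 3 := by gcongr
    _ = 8 * |T| ^ 3 := by ring

lemma littleo_shift {f : ℝ → ℝ} (c : ℝ)
    (h : f =o[atTop] fun T : ℝ => T ^ 3) :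
    (fun T : ℝ => f (T - c)) =o[atTop] fun T : ℝ => T ^ 3 := by
  have ht : Tendsto (fun T : ℝ => T - c) atTop atTop :=
    tendsto_atTop_add_const_right atTop (-c) tendsto_id |>.congr
      (by intro x; simp [sub_eq_add_neg, add_comm])
  exact (h.comp_tendsto ht).trans_isBigO (shifted_cube_isBigO c)

lemma quadratic_littleo (a b d : ℝ) :
    (fun T : ℝ => a * T ^ 2 + b * T + d) =o[atTop] fun T : ℝ => T ^ 3 := by
  have h2 : (fun T : ℝ => T ^ 2) =o[atTop] fun T : ℝ => T ^ 3 :=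
    isLittleO_pow_pow_atTop_of_lt (by norm_num)
  have h1 : (fun T : ℝ => T ^ 1) =o[atTop] fun T : ℝ => T ^ 3 :=
    isLittleO_pow_pow_atTop_of_lt (by norm_num)
  have h0 : (fun T : ℝ => T ^ 0) =o[atTop] fun T : ℝ => T ^ 3 :=
    isLittleO_pow_pow_atTop_of_lt (by norm_num)
  have := ((h2.const_mul_left a).add (h1.const_mul_left b)).add (h0.const_mul_left d)
  simpa using this

/-- under Assumption 1 (hypotheses `hW4`, `hW3`, `hW2` below),
`E(T; t₁,t₂,t₃,t₄,t₅) − E(T; t₅,t₂,t₃,t₄,t₁) = −(1/(96t₂t₄))·(1/t₅ − 1/t₁)·T³ + o(T³)`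
as `T → ∞`: the difference between the numbers of points moving on the H-junction `Γ_H` and on
the H-junction `Γ'_H` obtained by permuting the edges `e₁` and `e₅`, both started from `A`. -/
theorem Etot_perm_difference (t₁ t₂ t₃ t₄ t₅ : ℝ)
    (h₁ : 0 < t₁) (h₂ : 0 < t₂) (h₃ : 0 < t₃) (h₄ : 0 < t₄) (h₅ : 0 < t₅)
    (R : ℝ → ℝ → ℝ → ℝ → ℝ)
    (hW4 : ∀ σ : Fin 4 → Fin 5, Function.Injective σ →
      (fun T : ℝ => (W (fun i => 2 * ![t₁, t₂, t₃, t₄, t₅] (σ i)) T : ℝ)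
          - T ^ 4 / (384 * ∏ i, ![t₁, t₂, t₃, t₄, t₅] (σ i))
          - R (2 * ![t₁, t₂, t₃, t₄, t₅] (σ 0)) (2 * ![t₁, t₂, t₃, t₄, t₅] (σ 1))
              (2 * ![t₁, t₂, t₃, t₄, t₅] (σ 2)) (2 * ![t₁, t₂, t₃, t₄, t₅] (σ 3)) * T ^ 3)
        =o[atTop] fun T : ℝ => T ^ 3)
    (hW3 : ∀ σ : Fin 3 → Fin 5, Function.Injective σ →
      (fun T : ℝ => (W (fun i => 2 * ![t₁, t₂, t₃, t₄, t₅] (σ i)) T : ℝ)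
          - T ^ 3 / (48 * ∏ i, ![t₁, t₂, t₃, t₄, t₅] (σ i)))
        =o[atTop] fun T : ℝ => T ^ 3)
    (hW2 : ∀ (m : ℕ), m ≤ 2 → ∀ σ : Fin m → Fin 5, Function.Injective σ →
      (fun T : ℝ => (W (fun i => 2 * ![t₁, t₂, t₃, t₄, t₅] (σ i)) T : ℝ))
        =o[atTop] fun T : ℝ => T ^ 3) :
    (fun T : ℝ => ((Etot t₁ t₂ t₃ t₄ t₅ T - Etot t₅ t₂ t₃ t₄ t₁ T : ℤ) : ℝ)
        - (-(1/(96*t₂*t₄)) * (1/t₅ - 1/t₁)) * T ^ 3)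
      =o[atTop] fun T : ℝ => T ^ 3 := by
  -- specialized 4-variable asymptotics
  have hA : (fun T : ℝ => (W ![2*t₂, 2*t₃, 2*t₄, 2*t₅] T : ℝ)
      - T ^ 4 / (384 * (t₂ * t₃ * t₄ * t₅))
      - R (2*t₂) (2*t₃) (2*t₄) (2*t₅) * T ^ 3) =o[atTop] fun T : ℝ => T ^ 3 := by
    have h := hW4 ![1,2,3,4] (by decide)
    rw [show (∏ i, ![t₁, t₂, t₃, t₄, t₅] ((![1,2,3,4] : Fin 4 → Fin 5) i))
        = t₂*t₃*t₄*t₅ from by rw [Fin.prod_univ_four]; rfl] at h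
    exact h
  have hB : (fun T : ℝ => (W ![2*t₂, 2*t₃, 2*t₄, 2*t₁] T : ℝ)
      - T ^ 4 / (384 * (t₂ * t₃ * t₄ * t₁))
      - R (2*t₂) (2*t₃) (2*t₄) (2*t₁) * T ^ 3) =o[atTop] fun T : ℝ => T ^ 3 := by
    have h := hW4 ![1,2,3,0] (by decide)
    rw [show (∏ i, ![t₁, t₂, t₃, t₄, t₅] ((![1,2,3,0] : Fin 4 → Fin 5) i))
        = t₂*t₃*t₄*t₁ from by rw [Fin.prod_univ_four]; rfl] at h
    exact h
  have hC : (fun T : ℝ => (W ![2*t₁, 2*t₂, 2*t₃, 2*t₄] T : ℝ)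
      - T ^ 4 / (384 * (t₁ * t₂ * t₃ * t₄))
      - R (2*t₁) (2*t₂) (2*t₃) (2*t₄) * T ^ 3) =o[atTop] fun T : ℝ => T ^ 3 := by
    have h := hW4 ![0,1,2,3] (by decide)
    rw [show (∏ i, ![t₁, t₂, t₃, t₄, t₅] ((![0,1,2,3] : Fin 4 → Fin 5) i))
        = t₁*t₂*t₃*t₄ from by rw [Fin.prod_univ_four]; rfl] at h
    exact h
  have hD : (fun T : ℝ => (W ![2*t₅, 2*t₂, 2*t₃, 2*t₄] T : ℝ)
      - T ^ 4 / (384 * (t₅ * t₂ * t₃ * t₄))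
      - R (2*t₅) (2*t₂) (2*t₃) (2*t₄) * T ^ 3) =o[atTop] fun T : ℝ => T ^ 3 := by
    have h := hW4 ![4,1,2,3] (by decide)
    rw [show (∏ i, ![t₁, t₂, t₃, t₄, t₅] ((![4,1,2,3] : Fin 4 → Fin 5) i))
        = t₅*t₂*t₃*t₄ from by rw [Fin.prod_univ_four]; rfl] at h
    exact h
  -- specialized 3-variable asymptotics
  have h3A : (fun T : ℝ => (W ![2*t₂, 2*t₄, 2*t₅] T : ℝ)
      - T ^ 3 / (48 * (t₂ * t₄ * t₅))) =o[atTop] fun T : ℝ => T ^ 3 := by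
    have h := hW3 ![1,3,4] (by decide)
    rw [show (∏ i, ![t₁, t₂, t₃, t₄, t₅] ((![1,3,4] : Fin 3 → Fin 5) i))
        = t₂*t₄*t₅ from by rw [Fin.prod_univ_three]; rfl] at h
    exact h
  have h3B : (fun T : ℝ => (W ![2*t₂, 2*t₄, 2*t₁] T : ℝ)
      - T ^ 3 / (48 * (t₂ * t₄ * t₁))) =o[atTop] fun T : ℝ => T ^ 3 := by
    have h := hW3 ![1,3,0] (by decide)
    rw [show (∏ i, ![t₁, t₂, t₃, t₄, t₅] ((![1,3,0] : Fin 3 → Fin 5) i))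
        = t₂*t₄*t₁ from by rw [Fin.prod_univ_three]; rfl] at h
    exact h
  -- small terms
  have h2ab : (fun T : ℝ => (W ![2*t₁, 2*t₂] T : ℝ)) =o[atTop] fun T : ℝ => T ^ 3 :=
    hW2 2 le_rfl ![0,1] (by decide)
  have h2eb : (fun T : ℝ => (W ![2*t₅, 2*t₂] T : ℝ)) =o[atTop] fun T : ℝ => T ^ 3 :=
    hW2 2 le_rfl ![4,1] (by decide)
  have h1a : (fun T : ℝ => (W ![2*t₁] T : ℝ)) =o[atTop] fun T : ℝ => T ^ 3 :=
    hW2 1 (by norm_num) ![0] (by decide)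
  have h1e : (fun T : ℝ => (W ![2*t₅] T : ℝ)) =o[atTop] fun T : ℝ => T ^ 3 :=
    hW2 1 (by norm_num) ![4] (by decide)
  -- permutation identities
  have P1 : ∀ T, W ![2*t₅, 2*t₃, 2*t₄, 2*t₁] T = W ![2*t₁, 2*t₃, 2*t₄, 2*t₅] T :=
    fun T => W_congr _ _ ⟨![3,1,2,0], ![3,1,2,0], by decide, by decide⟩
      (fun i => by fin_cases i <;> rfl) T
  have P2 : ∀ T, W ![2*t₅, 2*t₄, 2*t₁] T = W ![2*t₁, 2*t₄, 2*t₅] T :=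
    fun T => W_congr _ _ ⟨![2,1,0], ![2,1,0], by decide, by decide⟩
      (fun i => by fin_cases i <;> rfl) T
  have P3 : ∀ T, W ![2*t₅, 2*t₂, 2*t₄, 2*t₁] T = W ![2*t₁, 2*t₂, 2*t₄, 2*t₅] T :=
    fun T => W_congr _ _ ⟨![3,1,2,0], ![3,1,2,0], by decide, by decide⟩
      (fun i => by fin_cases i <;> rfl) T
  have P4 : ∀ T, W ![2*t₅, 2*t₂, 2*t₃, 2*t₁] T = W ![2*t₁, 2*t₂, 2*t₃, 2*t₅] T :=
    fun T => W_congr _ _ ⟨![3,1,2,0], ![3,1,2,0], by decide, by decide⟩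
      (fun i => by fin_cases i <;> rfl) T
  have P5 : ∀ T, W ![2*t₁, 2*t₂, 2*t₃, 2*t₄] T = W ![2*t₂, 2*t₃, 2*t₄, 2*t₁] T :=
    fun T => W_congr _ _ ⟨![3,0,1,2], ![1,2,3,0], by decide, by decide⟩
      (fun i => by fin_cases i <;> rfl) T
  have P6 : ∀ T, W ![2*t₅, 2*t₂, 2*t₃, 2*t₄] T = W ![2*t₂, 2*t₃, 2*t₄, 2*t₅] T :=
    fun T => W_congr _ _ ⟨![3,0,1,2], ![1,2,3,0], by decide, by decide⟩
      (fun i => by fin_cases i <;> rfl) T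
  -- R is symmetric on the relevant quadruples
  have hRC : R (2*t₁) (2*t₂) (2*t₃) (2*t₄) = R (2*t₂) (2*t₃) (2*t₄) (2*t₁) := by
    have h := hC.sub hB
    have heq : (fun T : ℝ => ((W ![2*t₁, 2*t₂, 2*t₃, 2*t₄] T : ℝ)
        - T ^ 4 / (384 * (t₁ * t₂ * t₃ * t₄))
        - R (2*t₁) (2*t₂) (2*t₃) (2*t₄) * T ^ 3)
        - ((W ![2*t₂, 2*t₃, 2*t₄, 2*t₁] T : ℝ)
        - T ^ 4 / (384 * (t₂ * t₃ * t₄ * t₁))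
        - R (2*t₂) (2*t₃) (2*t₄) (2*t₁) * T ^ 3))
        = fun T : ℝ => (R (2*t₂) (2*t₃) (2*t₄) (2*t₁) - R (2*t₁) (2*t₂) (2*t₃) (2*t₄)) * T ^ 3 := by
      funext T
      rw [P5 T]
      ring_nf
    rw [heq] at h
    have := const_eq_zero_of_littleo h
    linarith
  have hRD : R (2*t₅) (2*t₂) (2*t₃) (2*t₄) = R (2*t₂) (2*t₃) (2*t₄) (2*t₅) := by
    have h := hD.sub hA
    have heq : (fun T : ℝ => ((W ![2*t₅, 2*t₂, 2*t₃, 2*t₄] T : ℝ)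
        - T ^ 4 / (384 * (t₅ * t₂ * t₃ * t₄))
        - R (2*t₅) (2*t₂) (2*t₃) (2*t₄) * T ^ 3)
        - ((W ![2*t₂, 2*t₃, 2*t₄, 2*t₅] T : ℝ)
        - T ^ 4 / (384 * (t₂ * t₃ * t₄ * t₅))
        - R (2*t₂) (2*t₃) (2*t₄) (2*t₅) * T ^ 3))
        = fun T : ℝ => (R (2*t₂) (2*t₃) (2*t₄) (2*t₅) - R (2*t₅) (2*t₂) (2*t₃) (2*t₄)) * T ^ 3 := by
      funext T
      rw [P6 T]
      ring_nf
    rw [heq] at h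
    have := const_eq_zero_of_littleo h
    linarith
  -- the quadratic error term coefficients
  set α : ℝ := 1 / (384 * (t₂ * t₃ * t₄ * t₅)) - 1 / (384 * (t₂ * t₃ * t₄ * t₁)) with hα
  set β : ℝ := R (2*t₂) (2*t₃) (2*t₄) (2*t₅) - R (2*t₂) (2*t₃) (2*t₄) (2*t₁) with hβ
  have Hsum := ((((((((((hA.sub hB).add (littleo_shift t₃ (hC.sub hD))).sub h3A).add
    h3B).add h2ab).sub h2eb).add h1a).sub h1e).sub (littleo_shift t₃ h2ab)).add
    (littleo_shift t₃ h2eb)).add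
    (quadratic_littleo (α * (-6 * t₃^2) + β * (3 * t₃))
      (α * (4 * t₃^3) + β * (-3 * t₃^2)) (α * (-t₃^4) + β * (t₃^3)))
  apply Hsum.congr_left
  intro T
  simp only [Etot]
  push_cast
  rw [P1 T, P2 T, P3 (T - t₃), P4 (T - t₃), hRC, hRD, hα, hβ]
  have e₁ := h₁.ne'
  have e₂ := h₂.ne'
  have e₃ := h₃.ne'
  have e₄ := h₄.ne'
  have e₅ := h₅.ne'
  field_simp
  ring
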